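/- Let q, n ≥ 1 and let 1/2 < δ ≤ 1. Let X and Y be independent random variables on (F_{2^q})^n, each with min-entropy at least δqn. Then the statistical distance between the distribution of Ext_IP^{n,q}(X,Y) and the uniform distribution on F_{2^q} is at most 2^{2q} · 2^{−(2δ−1)qn/2}; that is, (1/2) Σ_{z ∈ F_{2^q}} |Pr[Ext_IP^{n,q}(X,Y) = z] − 2^{−q}| ≤ 2^{2q − (2δ−1)qn/2}. -/
import Mathlib

set_option linter.unusedSectionVars false
set_option maxHeartbeats 1000000

section aux
variable {F : Type*} [Field F] [CharP F 2] [Module (ZMod 2) F]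

noncomputable def chi (φ : Module.Dual (ZMod 2) F) (x : F) : ℝ :=
  if φ x = 0 then 1 else -1

lemma zmod2_cases : ∀ u : ZMod 2, u = 0 ∨ u = 1 := by decide

lemma chi_add (φ : Module.Dual (ZMod 2) F) (x y : F) :
    chi φ (x + y) = chi φ x * chi φ y := by
  unfold chi
  rw [map_add]
  rcases zmod2_cases (φ x) with h1 | h1 <;> rcases zmod2_cases (φ y) with h2 | h2 <;>
    simp [h1, h2, show (1+1 : ZMod 2) = 0 by decide, show (1:ZMod 2) ≠ 0 by decide]

lemma chi_abs (φ : Module.Dual (ZMod 2) F) (x : F) : |chi φ x| = 1 := by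
  unfold chi; split <;> simp

lemma chi_zero_arg (φ : Module.Dual (ZMod 2) F) : chi φ 0 = 1 := by
  simp [chi]

lemma chi_zero_fun (x : F) : chi (0 : Module.Dual (ZMod 2) F) x = 1 := by
  simp [chi]

lemma chi_add_funs (φ ψ : Module.Dual (ZMod 2) F) (x : F) :
    chi (φ + ψ) x = chi φ x * chi ψ x := by
  unfold chi
  rw [LinearMap.add_apply]
  rcases zmod2_cases (φ x) with h1 | h1 <;> rcases zmod2_cases (ψ x) with h2 | h2 <;>
    simp [h1, h2, show (1+1 : ZMod 2) = 0 by decide, show (1:ZMod 2) ≠ 0 by decide]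

variable [Fintype F] [DecidableEq F]

/-- Sum of a nontrivial character over all vectors paired with a fixed vector. -/
lemma sum_chi_dot {n : ℕ} (φ : Module.Dual (ZMod 2) F) (hφ : φ ≠ 0) (v : Fin n → F) :
    ∑ b : Fin n → F, chi φ (∑ i, v i * b i)
      = if v = 0 then ((Fintype.card F : ℝ)) ^ n else 0 := by
  by_cases hv : v = 0
  · subst hv
    simp [chi_zero_arg, Finset.card_univ]
  · rw [if_neg hv]
    -- get u with φ u = 1
    have : ∃ u : F, φ u ≠ 0 := by
      by_contra h
      push_neg at h
      exact hφ (LinearMap.ext fun x => h x)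
    obtain ⟨u, hu⟩ := this
    have hu1 : chi φ u = -1 := by unfold chi; rw [if_neg hu]
    obtain ⟨i, hi⟩ := Function.ne_iff.mp hv
    have hi : v i ≠ 0 := hi
    set b₀ : Fin n → F := fun j => if j = i then (v i)⁻¹ * u else 0 with hb₀
    have hdot : ∑ j, v j * b₀ j = u := by
      rw [Finset.sum_eq_single i]
      · simp [hb₀, mul_comm, mul_assoc, hi]
        field_simp
      · intro j _ hj; simp [hb₀, hj]
      · intro h; exact absurd (Finset.mem_univ i) h
    set S := ∑ b : Fin n → F, chi φ (∑ j, v j * b j) with hS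
    have hneg : S = -S := by
      calc S = ∑ b : Fin n → F, chi φ (∑ j, v j * (b j + b₀ j)) := by
              rw [hS]
              exact (Fintype.sum_equiv (Equiv.addRight b₀) _ _ (fun b => by simp)).symm
        _ = ∑ b : Fin n → F, chi φ ((∑ j, v j * b j) + u) := by
              apply Finset.sum_congr rfl
              intro b _
              congr 1
              rw [← hdot, ← Finset.sum_add_distrib]
              exact Finset.sum_congr rfl fun j _ => by ring
        _ = ∑ b : Fin n → F, chi φ (∑ j, v j * b j) * chi φ u := by
              exact Finset.sum_congr rfl fun b _ => chi_add φ _ _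
        _ = -S := by rw [hu1]; simp [hS, ← Finset.sum_neg_distrib]
    linarith

/-- Sum over all characters of a fixed element. -/
lemma sum_chi_dual [Fintype (Module.Dual (ZMod 2) F)] (w : F) :
    ∑ φ : Module.Dual (ZMod 2) F, chi φ w
      = if w = 0 then (Fintype.card (Module.Dual (ZMod 2) F) : ℝ) else 0 := by
  by_cases hw : w = 0
  · subst hw; simp [chi_zero_arg, Finset.card_univ]
  · rw [if_neg hw]
    have : ∃ φ₀ : Module.Dual (ZMod 2) F, φ₀ w ≠ 0 := by
      by_contra h
      push_neg at h
      exact hw ((Module.forall_dual_apply_eq_zero_iff (ZMod 2) w).mp h)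
    obtain ⟨φ₀, hφ₀⟩ := this
    have hφ₀1 : chi φ₀ w = -1 := by unfold chi; rw [if_neg hφ₀]
    set S := ∑ φ : Module.Dual (ZMod 2) F, chi φ w with hS
    have hneg : S = -S := by
      calc S = ∑ φ : Module.Dual (ZMod 2) F, chi (φ + φ₀) w := by
              rw [hS]
              exact (Fintype.sum_equiv (Equiv.addRight φ₀) _ _ (fun φ => by simp)).symm
        _ = ∑ φ : Module.Dual (ZMod 2) F, chi φ w * chi φ₀ w :=
              Finset.sum_congr rfl fun φ _ => chi_add_funs φ φ₀ w
        _ = -S := by rw [hφ₀1]; simp [hS, ← Finset.sum_neg_distrib]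
    linarith

end aux


/-- Let `q, n ≥ 1`, `1/2 < δ ≤ 1`, let `F` be the finite field with `2^q`
elements, and let `X, Y` be independent random variables on `Fⁿ` (given by their
distributions, the joint being the product), each with min-entropy at least `δqn`. Then the
statistical distance between the distribution of `Ext_IP(X,Y) = Σᵢ Xᵢ Yᵢ` and the uniform
distribution on `F` is at most `2^{2q} · 2^{−(2δ−1)qn/2}`. -/
theorem stmt_7 (q n : ℕ) (hq : 1 ≤ q) (hn : 1 ≤ n)
    (δ : ℝ) (hδ : 1 / 2 < δ) (hδ1 : δ ≤ 1)
    (F : Type*) [Field F] [Fintype F] [DecidableEq F]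
    (hF : Fintype.card F = 2 ^ q)
    (X Y : (Fin n → F) → ℝ)
    (hX0 : ∀ a, 0 ≤ X a) (hX1 : ∑ a, X a = 1)
    (hY0 : ∀ a, 0 ≤ Y a) (hY1 : ∑ a, Y a = 1)
    (hXk : ∀ a, X a ≤ (2 : ℝ) ^ (-(δ * q * n)))
    (hYk : ∀ a, Y a ≤ (2 : ℝ) ^ (-(δ * q * n))) :
    (1 / 2) * ∑ z : F,
        |(∑ a : Fin n → F, ∑ b : Fin n → F,
            X a * Y b * (if (∑ i, a i * b i) = z then (1 : ℝ) else 0)) - ((2 : ℝ) ^ q)⁻¹|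
      ≤ (2 : ℝ) ^ (2 * (q : ℝ)) * (2 : ℝ) ^ (-(2 * δ - 1) * q * n / 2) := by
  -- setup of instances
  haveI hchar : CharP F 2 := by
    obtain ⟨p, hc⟩ := CharP.exists F
    haveI := hc
    have hp : p.Prime := CharP.char_is_prime F p
    obtain ⟨m, hm⟩ := FiniteField.card F p
    have hdvd : p ∣ 2 ^ q := by
      rw [← hF, hm.2]
      exact dvd_pow_self p (by positivity)
    have hp2 : p = 2 :=
      (Nat.prime_dvd_prime_iff_eq hp Nat.prime_two).mp (hp.dvd_of_dvd_pow hdvd)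
    exact hp2 ▸ hc
  letI : Algebra (ZMod 2) F := ZMod.algebra F 2
  letI : Fintype (Module.Dual (ZMod 2) F) :=
    Fintype.ofInjective (fun φ => (φ : F → ZMod 2)) DFunLike.coe_injective
  have hfr : Module.finrank (ZMod 2) F = q := by
    have h1 : Fintype.card F = Fintype.card (ZMod 2) ^ Module.finrank (ZMod 2) F :=
      Module.card_eq_pow_finrank
    rw [hF, ZMod.card] at h1
    exact (Nat.pow_right_injective le_rfl h1.symm)
  have hcardD : Fintype.card (Module.Dual (ZMod 2) F) = 2 ^ q := by
    have h1 : Fintype.card (Module.Dual (ZMod 2) F)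
        = Fintype.card (ZMod 2) ^ Module.finrank (ZMod 2) (Module.Dual (ZMod 2) F) :=
      Module.card_eq_pow_finrank
    rw [h1, ZMod.card, Subspace.dual_finrank_eq, hfr]
  have haddzero : ∀ x y : F, x + y = 0 ↔ x = y := by
    intro x y; rw [← CharTwo.sub_eq_add, sub_eq_zero]
  -- notation
  set E : ℝ := -(2 * δ - 1) * q * n / 2 with hE
  set k : ℝ := -(δ * q * n) with hk
  set S : Module.Dual (ZMod 2) F → ℝ :=
    fun φ => ∑ a : Fin n → F, ∑ b : Fin n → F, X a * Y b * chi φ (∑ i, a i * b i) with hSdef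
  -- second moments
  have hX2 : ∑ a : Fin n → F, (X a) ^ 2 ≤ (2:ℝ) ^ k := by
    calc ∑ a : Fin n → F, (X a) ^ 2 ≤ ∑ a : Fin n → F, (2:ℝ) ^ k * X a := by
          apply Finset.sum_le_sum
          intro a _
          rw [pow_two]
          exact mul_le_mul_of_nonneg_right (hXk a) (hX0 a)
      _ = (2:ℝ) ^ k := by rw [← Finset.mul_sum, hX1, mul_one]
  have hY2 : ∑ b : Fin n → F, (Y b) ^ 2 ≤ (2:ℝ) ^ k := by
    calc ∑ b : Fin n → F, (Y b) ^ 2 ≤ ∑ b : Fin n → F, (2:ℝ) ^ k * Y b := by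
          apply Finset.sum_le_sum
          intro b _
          rw [pow_two]
          exact mul_le_mul_of_nonneg_right (hYk b) (hY0 b)
      _ = (2:ℝ) ^ k := by rw [← Finset.mul_sum, hY1, mul_one]
  have hX2nonneg : (0:ℝ) ≤ ∑ a : Fin n → F, (X a) ^ 2 :=
    Finset.sum_nonneg fun a _ => sq_nonneg _
  have hY2nonneg : (0:ℝ) ≤ ∑ b : Fin n → F, (Y b) ^ 2 :=
    Finset.sum_nonneg fun b _ => sq_nonneg _
  have hcardFn : ((Fintype.card F : ℝ)) ^ n = (2:ℝ) ^ ((q * n : ℕ) : ℝ) := by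
    rw [hF, Real.rpow_natCast]
    push_cast
    rw [pow_mul]
  -- the character sum bound
  have hSbound : ∀ φ : Module.Dual (ZMod 2) F, φ ≠ 0 → |S φ| ≤ (2:ℝ) ^ E := by
    intro φ hφ
    set T : (Fin n → F) → ℝ := fun a => ∑ b, Y b * chi φ (∑ i, a i * b i) with hTdef
    have hST : S φ = ∑ a, X a * T a := by
      rw [hSdef]
      apply Finset.sum_congr rfl
      intro a _
      rw [hTdef, Finset.mul_sum]
      apply Finset.sum_congr rfl
      intro b _
      ring
    have hTsq : ∑ a : Fin n → F, (T a) ^ 2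
        = (2:ℝ) ^ ((q * n : ℕ) : ℝ) * ∑ b : Fin n → F, (Y b) ^ 2 := by
      have h1 : ∀ a : Fin n → F, (T a) ^ 2
          = ∑ b : Fin n → F, ∑ b' : Fin n → F,
              (Y b * Y b') * chi φ (∑ i, (b i + b' i) * a i) := by
        intro a
        rw [pow_two, hTdef, Finset.sum_mul_sum]
        apply Finset.sum_congr rfl
        intro b _
        apply Finset.sum_congr rfl
        intro b' _
        have h2 : chi φ (∑ i, a i * b i) * chi φ (∑ i, a i * b' i)
            = chi φ (∑ i, (b i + b' i) * a i) := by
          rw [← chi_add]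
          congr 1
          rw [← Finset.sum_add_distrib]
          exact Finset.sum_congr rfl fun i _ => by ring
        calc Y b * chi φ (∑ i, a i * b i) * (Y b' * chi φ (∑ i, a i * b' i))
            = (Y b * Y b') * (chi φ (∑ i, a i * b i) * chi φ (∑ i, a i * b' i)) := by ring
          _ = (Y b * Y b') * chi φ (∑ i, (b i + b' i) * a i) := by rw [h2]
      calc ∑ a : Fin n → F, (T a) ^ 2
          = ∑ a : Fin n → F, ∑ b : Fin n → F, ∑ b' : Fin n → F,
              (Y b * Y b') * chi φ (∑ i, (b i + b' i) * a i) :=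
            Finset.sum_congr rfl fun a _ => h1 a
        _ = ∑ b : Fin n → F, ∑ b' : Fin n → F, ∑ a : Fin n → F,
              (Y b * Y b') * chi φ (∑ i, (b i + b' i) * a i) := by
            rw [Finset.sum_comm]
            exact Finset.sum_congr rfl fun b _ => Finset.sum_comm
        _ = ∑ b : Fin n → F, ∑ b' : Fin n → F,
              (Y b * Y b') * (if (fun i => b i + b' i) = 0
                then ((Fintype.card F : ℝ)) ^ n else 0) := by
            apply Finset.sum_congr rfl
            intro b _
            apply Finset.sum_congr rfl
            intro b' _
            rw [← Finset.mul_sum, sum_chi_dot φ hφ]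
        _ = ∑ b : Fin n → F, ∑ b' : Fin n → F,
              (if b' = b then ((Fintype.card F : ℝ)) ^ n * (Y b * Y b') else 0) := by
            apply Finset.sum_congr rfl
            intro b _
            apply Finset.sum_congr rfl
            intro b' _
            have : ((fun i => b i + b' i) = 0) ↔ b' = b := by
              constructor
              · intro h
                funext i
                exact ((haddzero (b i) (b' i)).mp (congrFun h i)).symm
              · intro h
                funext i
                rw [h]
                exact CharTwo.add_self_eq_zero (b i)
            simp only [this]
            split <;> ring
        _ = ∑ b : Fin n → F, ((Fintype.card F : ℝ)) ^ n * (Y b * Y b) := by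
            apply Finset.sum_congr rfl
            intro b _
            rw [Finset.sum_ite_eq']
            simp
        _ = (2:ℝ) ^ ((q * n : ℕ) : ℝ) * ∑ b : Fin n → F, (Y b) ^ 2 := by
            rw [Finset.mul_sum, ← hcardFn]
            exact Finset.sum_congr rfl fun b _ => by ring
    have hcs : (S φ) ^ 2 ≤ (∑ a : Fin n → F, (X a) ^ 2) * (∑ a : Fin n → F, (T a) ^ 2) := by
      rw [hST]
      exact Finset.sum_mul_sq_le_sq_mul_sq _ _ _
    have hfinal : (S φ) ^ 2 ≤ (2:ℝ) ^ (2 * E) := by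
      have h2 : (∑ a : Fin n → F, (T a) ^ 2) ≤ (2:ℝ) ^ ((q * n : ℕ) : ℝ) * (2:ℝ) ^ k := by
        rw [hTsq]
        exact mul_le_mul_of_nonneg_left hY2 (Real.rpow_nonneg (by norm_num) _)
      have h3 : (S φ) ^ 2 ≤ (2:ℝ) ^ k * ((2:ℝ) ^ ((q * n : ℕ) : ℝ) * (2:ℝ) ^ k) := by
        calc (S φ) ^ 2 ≤ (∑ a : Fin n → F, (X a) ^ 2) * (∑ a : Fin n → F, (T a) ^ 2) := hcs
          _ ≤ (2:ℝ) ^ k * ((2:ℝ) ^ ((q * n : ℕ) : ℝ) * (2:ℝ) ^ k) := by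
              apply mul_le_mul hX2 h2 (by rw [hTsq] at *; positivity) (Real.rpow_nonneg (by norm_num) _)
      calc (S φ) ^ 2 ≤ (2:ℝ) ^ k * ((2:ℝ) ^ ((q * n : ℕ) : ℝ) * (2:ℝ) ^ k) := h3
        _ = (2:ℝ) ^ (k + ((q * n : ℕ) : ℝ) + k) := by
            rw [Real.rpow_add (by norm_num), Real.rpow_add (by norm_num)]
            ring
        _ = (2:ℝ) ^ (2 * E) := by
            congr 1
            rw [hk, hE]
            push_cast
            ring
    have h2E : (2:ℝ) ^ (2 * E) = ((2:ℝ) ^ E) ^ 2 := by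
      rw [← Real.rpow_natCast ((2:ℝ) ^ E) 2, ← Real.rpow_mul (by norm_num)]
      norm_num
      ring_nf
    calc |S φ| = Real.sqrt ((S φ) ^ 2) := (Real.sqrt_sq_eq_abs _).symm
      _ ≤ Real.sqrt (((2:ℝ) ^ E) ^ 2) := Real.sqrt_le_sqrt (h2E ▸ hfinal)
      _ = (2:ℝ) ^ E := Real.sqrt_sq (Real.rpow_nonneg (by norm_num) _)
  -- Fourier inversion
  have hfour : ∀ z : F, ∑ φ : Module.Dual (ZMod 2) F, chi φ z * S φ
      = (2:ℝ) ^ q * (∑ a : Fin n → F, ∑ b : Fin n → F,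
          X a * Y b * (if (∑ i, a i * b i) = z then (1:ℝ) else 0)) := by
    intro z
    calc ∑ φ : Module.Dual (ZMod 2) F, chi φ z * S φ
        = ∑ φ : Module.Dual (ZMod 2) F, ∑ a : Fin n → F, ∑ b : Fin n → F,
            X a * Y b * (chi φ (∑ i, a i * b i) * chi φ z) := by
          apply Finset.sum_congr rfl
          intro φ _
          rw [hSdef, Finset.mul_sum]
          apply Finset.sum_congr rfl
          intro a _
          rw [Finset.mul_sum]
          exact Finset.sum_congr rfl fun b _ => by ring
      _ = ∑ a : Fin n → F, ∑ b : Fin n → F, X a * Y b *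
            ∑ φ : Module.Dual (ZMod 2) F, chi φ ((∑ i, a i * b i) + z) := by
          rw [Finset.sum_comm]
          apply Finset.sum_congr rfl
          intro a _
          rw [Finset.sum_comm]
          apply Finset.sum_congr rfl
          intro b _
          rw [Finset.mul_sum]
          exact Finset.sum_congr rfl fun φ _ => by rw [chi_add]
      _ = ∑ a : Fin n → F, ∑ b : Fin n → F, X a * Y b *
            ((2:ℝ) ^ q * (if (∑ i, a i * b i) = z then (1:ℝ) else 0)) := by
          apply Finset.sum_congr rfl
          intro a _
          apply Finset.sum_congr rfl
          intro b _
          rw [sum_chi_dual, hcardD]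
          simp only [haddzero]
          push_cast
          split <;> ring
      _ = (2:ℝ) ^ q * (∑ a : Fin n → F, ∑ b : Fin n → F,
            X a * Y b * (if (∑ i, a i * b i) = z then (1:ℝ) else 0)) := by
          rw [Finset.mul_sum]
          apply Finset.sum_congr rfl
          intro a _
          rw [Finset.mul_sum]
          exact Finset.sum_congr rfl fun b _ => by ring
  have hS0 : S 0 = 1 := by
    rw [hSdef]
    have : ∀ a : Fin n → F, ∑ b : Fin n → F, X a * Y b * chi 0 (∑ i, a i * b i)
        = X a * ∑ b : Fin n → F, Y b := by
      intro a
      rw [Finset.mul_sum]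
      exact Finset.sum_congr rfl fun b _ => by rw [chi_zero_fun]; ring
    calc (∑ a : Fin n → F, ∑ b : Fin n → F, X a * Y b * chi 0 (∑ i, a i * b i))
        = ∑ a : Fin n → F, X a * ∑ b : Fin n → F, Y b :=
          Finset.sum_congr rfl fun a _ => this a
      _ = 1 := by rw [hY1]; simp [hX1]
  -- the per-z bound
  have hzbound : ∀ z : F,
      |(∑ a : Fin n → F, ∑ b : Fin n → F,
          X a * Y b * (if (∑ i, a i * b i) = z then (1:ℝ) else 0)) - ((2:ℝ) ^ q)⁻¹|
        ≤ ((2:ℝ) ^ q)⁻¹ * ∑ φ ∈ Finset.univ.erase (0 : Module.Dual (ZMod 2) F), |S φ| := by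
    intro z
    have hpow : (0:ℝ) < (2:ℝ) ^ q := by positivity
    have hsplit : ∑ φ : Module.Dual (ZMod 2) F, chi φ z * S φ
        = 1 + ∑ φ ∈ Finset.univ.erase (0 : Module.Dual (ZMod 2) F), chi φ z * S φ := by
      rw [← Finset.add_sum_erase _ _ (Finset.mem_univ (0 : Module.Dual (ZMod 2) F))]
      rw [hS0, chi_zero_fun, one_mul]
    have hdiff : (∑ a : Fin n → F, ∑ b : Fin n → F,
        X a * Y b * (if (∑ i, a i * b i) = z then (1:ℝ) else 0)) - ((2:ℝ) ^ q)⁻¹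
        = ((2:ℝ) ^ q)⁻¹ *
            ∑ φ ∈ Finset.univ.erase (0 : Module.Dual (ZMod 2) F), chi φ z * S φ := by
      have h1 := hfour z
      rw [hsplit] at h1
      field_simp at h1 ⊢
      linarith
    rw [hdiff, abs_mul, abs_of_pos (inv_pos.mpr hpow)]
    apply mul_le_mul_of_nonneg_left _ (le_of_lt (inv_pos.mpr hpow))
    calc |∑ φ ∈ Finset.univ.erase (0 : Module.Dual (ZMod 2) F), chi φ z * S φ|
        ≤ ∑ φ ∈ Finset.univ.erase (0 : Module.Dual (ZMod 2) F), |chi φ z * S φ| :=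
          Finset.abs_sum_le_sum_abs _ _
      _ = ∑ φ ∈ Finset.univ.erase (0 : Module.Dual (ZMod 2) F), |S φ| := by
          apply Finset.sum_congr rfl
          intro φ _
          rw [abs_mul, chi_abs, one_mul]
  -- putting it together
  have hC : ∑ φ ∈ Finset.univ.erase (0 : Module.Dual (ZMod 2) F), |S φ|
      ≤ (2 ^ q - 1 : ℕ) * (2:ℝ) ^ E := by
    have h1 : (Finset.univ.erase (0 : Module.Dual (ZMod 2) F)).card = 2 ^ q - 1 := by
      rw [Finset.card_erase_of_mem (Finset.mem_univ _), Finset.card_univ, hcardD]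
    calc ∑ φ ∈ Finset.univ.erase (0 : Module.Dual (ZMod 2) F), |S φ|
        ≤ (Finset.univ.erase (0 : Module.Dual (ZMod 2) F)).card • (2:ℝ) ^ E := by
          apply Finset.sum_le_card_nsmul
          intro φ hφ
          exact hSbound φ (Finset.ne_of_mem_erase hφ)
      _ = (2 ^ q - 1 : ℕ) * (2:ℝ) ^ E := by rw [h1, nsmul_eq_mul]
  have hEpos : (0:ℝ) < (2:ℝ) ^ E := Real.rpow_pos_of_pos (by norm_num) _
  calc (1 / 2) * ∑ z : F,
        |(∑ a : Fin n → F, ∑ b : Fin n → F,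
            X a * Y b * (if (∑ i, a i * b i) = z then (1 : ℝ) else 0)) - ((2 : ℝ) ^ q)⁻¹|
      ≤ (1 / 2) * ∑ z : F, ((2:ℝ) ^ q)⁻¹ *
          ∑ φ ∈ Finset.univ.erase (0 : Module.Dual (ZMod 2) F), |S φ| := by
        apply mul_le_mul_of_nonneg_left _ (by norm_num)
        exact Finset.sum_le_sum fun z _ => hzbound z
    _ = (1 / 2) * ∑ φ ∈ Finset.univ.erase (0 : Module.Dual (ZMod 2) F), |S φ| := by
        rw [Finset.sum_const, Finset.card_univ, hF, nsmul_eq_mul]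
        congr 1
        push_cast
        field_simp
    _ ≤ (1 / 2) * ((2 ^ q - 1 : ℕ) * (2:ℝ) ^ E) := by
        apply mul_le_mul_of_nonneg_left hC (by norm_num)
    _ ≤ (2 : ℝ) ^ (2 * (q : ℝ)) * (2:ℝ) ^ E := by
        have h1 : (2 : ℝ) ^ (2 * (q : ℝ)) = (2:ℝ) ^ (2 * q : ℕ) := by
          rw [← Real.rpow_natCast (2:ℝ) (2 * q)]
          push_cast
          ring_nf
        rw [h1]
        have h2 : ((2 ^ q - 1 : ℕ) : ℝ) ≤ (2:ℝ) ^ (2 * q : ℕ) := by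
          calc ((2 ^ q - 1 : ℕ) : ℝ) ≤ ((2 ^ q : ℕ) : ℝ) := by
                exact_mod_cast Nat.sub_le _ _
            _ = (2:ℝ) ^ q := by push_cast; ring
            _ ≤ (2:ℝ) ^ (2 * q : ℕ) := by
                apply pow_le_pow_right₀ (by norm_num)
                omega
        nlinarith [hEpos.le, mul_le_mul_of_nonneg_right h2 hEpos.le]
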